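/- arXiv:2204.03519 — 4 statements merged into one kernel-verified Lean document; each statement's English description precedes it below -/
import Mathlib

section
/- For all natural numbers k, s ≥ 1 and every real M ≥ 3, one has ∑_{m ≤ M} τ_k(m)^s ≤ M · (2 log M)^{k^s − 1}. -/
open Finset

/-- The `k`-fold divisor function `τ_k(n)`: the number of `k`-tuples
`(a_1, …, a_k)` of positive integers with `a_1 ⋯ a_k = n`. -/
def tauk (k n : ℕ) : ℕ :=
  ((Fintype.piFinset fun _ : Fin k => Finset.Icc 1 n).filter fun f => ∏ i, f i = n).card

/-!
As arithmetic functions, `τ_k = ζ ^ k`. Every divisor of `uv` is a product of a divisor of `u`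
and one of `v`, so each `ζ ^ b` is submultiplicative; splitting an `ab`-tuple into `a` blocks of
length `b` then gives `τ_a(n) τ_b(n) ≤ τ_{ab}(n)`, hence `τ_k(n)^s ≤ τ_{k^s}(n)`.
Writing `τ_{K+1} = ζ * τ_K`, the sum `∑_{n ≤ x} τ_{K+1}(n)` equals `∑_{d ≤ x} ∑_{m ≤ x/d} τ_K(m)`,
and induction on `K` with `∑_{d ≤ x} 1/d ≤ 1 + log x` bounds it by `x (1 + log x)^K`.
Finally `1 + log M ≤ 2 log M` because `M ≥ 3 > e`.
-/

open scoped ArithmeticFunction.zeta Pointwise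

namespace Nat

lemma Icc_one_eq_Ioc_zero (n : ℕ) : Icc 1 n = Ioc 0 n := Icc_add_one_left_eq_Ioc 0 n

lemma sum_finMulAntidiag_succ {M : Type*} [AddCommMonoid M] (d n : ℕ)
    (g : (Fin (d + 1) → ℕ) → M) :
    ∑ x ∈ finMulAntidiag (d + 1) n, g x =
      ∑ p ∈ n.divisorsAntidiagonal, ∑ y ∈ finMulAntidiag d p.2, g (Fin.cons p.1 y) := by
  rw [sum_sigma']
  refine sum_nbij' (fun x => ⟨(x 0, ∏ i, Fin.tail x i), Fin.tail x⟩)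
    (fun q => Fin.cons q.1.1 q.2) ?_ ?_ ?_ ?_ ?_
  · intro x hx
    rw [mem_finMulAntidiag, Fin.prod_univ_succ] at hx
    simp only [mem_sigma, mem_divisorsAntidiagonal, mem_finMulAntidiag]
    exact ⟨hx, trivial, right_ne_zero_of_mul (hx.1 ▸ hx.2)⟩
  · rintro ⟨⟨a, b⟩, y⟩ hq
    simp only [mem_sigma, mem_divisorsAntidiagonal, mem_finMulAntidiag] at hq ⊢
    rw [Fin.prod_univ_succ]
    simpa [hq.2.1] using hq.1
  · intro x _
    exact Fin.cons_self_tail x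
  · rintro ⟨⟨a, b⟩, y⟩ hq
    simp only [mem_sigma, mem_finMulAntidiag] at hq
    simp [Fin.tail, hq.2.1]
  · intro x _
    simp

end Nat

theorem sum_Icc_inv_le_one_add_log {x : ℝ} (hx : 1 ≤ x) :
    ∑ d ∈ Icc 1 ⌊x⌋₊, (d : ℝ)⁻¹ ≤ 1 + Real.log x :=
  calc ∑ d ∈ Icc 1 ⌊x⌋₊, (d : ℝ)⁻¹ = harmonic ⌊x⌋₊ := by simp [harmonic_eq_sum_Icc]
    _ ≤ 1 + Real.log ⌊x⌋₊ := harmonic_le_one_add_log _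
    _ ≤ 1 + Real.log x := by
      gcongr
      · exact_mod_cast Nat.floor_pos.2 hx
      · exact Nat.floor_le (by linarith)

namespace ArithmeticFunction

theorem pow_apply_eq_sum_finMulAntidiag {R : Type*} [CommSemiring R] (f : ArithmeticFunction R)
    (k n : ℕ) : (f ^ k) n = ∑ x ∈ Nat.finMulAntidiag k n, ∏ i, f (x i) := by
  induction k generalizing n with
  | zero =>
    rcases eq_or_ne n 1 with rfl | hn
    · simp [Nat.finMulAntidiag_one]
    · simp [one_apply_ne hn, Nat.finMulAntidiag_zero_left hn]
  | succ k ih =>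
    simp only [pow_succ', mul_apply, ih, mul_sum, Nat.sum_finMulAntidiag_succ, Fin.prod_univ_succ,
      Fin.cons_zero, Fin.cons_succ]

theorem zeta_pow_apply (k n : ℕ) : (ζ ^ k) n = #(Nat.finMulAntidiag k n) := by
  rw [pow_apply_eq_sum_finMulAntidiag, card_eq_sum_ones]
  refine sum_congr rfl fun x hx => prod_eq_one fun i _ => ?_
  exact zeta_apply_ne (Nat.ne_zero_of_mem_finMulAntidiag hx i)

theorem zeta_mul_apply_mul_le {f : ArithmeticFunction ℕ} (hf : ∀ u v, f (u * v) ≤ f u * f v)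
    (u v : ℕ) : (ζ * f) (u * v) ≤ (ζ * f) u * (ζ * f) v := by
  simp only [zeta_mul_apply, Nat.divisors_mul, sum_mul_sum, ← sum_product']
  calc ∑ d ∈ u.divisors * v.divisors, f d
      ≤ ∑ p ∈ u.divisors ×ˢ v.divisors, f (p.1 * p.2) :=
        sum_image_le_of_nonneg fun _ _ => Nat.zero_le _
    _ ≤ ∑ p ∈ u.divisors ×ˢ v.divisors, f p.1 * f p.2 := sum_le_sum fun p _ => hf p.1 p.2

theorem zeta_pow_apply_mul_le (k u v : ℕ) :
    (ζ ^ k) (u * v) ≤ (ζ ^ k) u * (ζ ^ k) v := by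
  induction k generalizing u v with
  | zero =>
    simp only [pow_zero, one_apply, mul_eq_one]
    split_ifs <;> simp_all
  | succ k ih =>
    rw [pow_succ']
    exact zeta_mul_apply_mul_le ih u v

theorem zeta_pow_apply_mul_zeta_pow_apply_le (a b n : ℕ) :
    (ζ ^ a) n * (ζ ^ b) n ≤ (ζ ^ (b * a)) n := by
  rw [pow_mul, pow_apply_eq_sum_finMulAntidiag (ζ ^ b), zeta_pow_apply a, ← smul_eq_mul,
    ← sum_const]
  refine sum_le_sum fun x hx => ?_
  rw [← Nat.prod_eq_of_mem_finMulAntidiag hx]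
  refine le_prod_of_submultiplicative _ ?_ (zeta_pow_apply_mul_le b) _ _
  simp [zeta_pow_apply, Nat.finMulAntidiag_one]

theorem zeta_pow_apply_pow_le {n : ℕ} (hn : n ≠ 0) (k s : ℕ) :
    (ζ ^ k) n ^ s ≤ (ζ ^ (k ^ s)) n := by
  induction s with
  | zero => simp [zeta_apply_ne hn]
  | succ s ih =>
    calc (ζ ^ k) n ^ (s + 1)
        = (ζ ^ k) n * (ζ ^ k) n ^ s := pow_succ' _ _
      _ ≤ (ζ ^ k) n * (ζ ^ (k ^ s)) n := by gcongr
      _ ≤ (ζ ^ (k ^ (s + 1))) n := by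
        rw [pow_succ]
        exact zeta_pow_apply_mul_zeta_pow_apply_le k (k ^ s) n

theorem sum_Icc_zeta_mul_apply (f : ArithmeticFunction ℕ) (N : ℕ) :
    ∑ n ∈ Icc 1 N, ((ζ * f) n : ℝ) = ∑ d ∈ Icc 1 N, ∑ m ∈ Icc 1 (N / d), (f m : ℝ) := by
  rw [← Nat.cast_sum, Nat.Icc_one_eq_Ioc_zero, sum_Ioc_mul_eq_sum_sum, Nat.cast_sum]
  refine sum_congr rfl fun d hd => ?_
  rw [zeta_apply_ne (mem_Ioc.1 hd).1.ne', one_mul, Nat.Icc_one_eq_Ioc_zero, Nat.cast_sum]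

theorem sum_Icc_zeta_pow_succ_le (K : ℕ) {x : ℝ} (hx : 1 ≤ x) :
    ∑ n ∈ Icc 1 ⌊x⌋₊, ((ζ ^ (K + 1)) n : ℝ) ≤ x * (1 + Real.log x) ^ K := by
  induction K generalizing x with
  | zero =>
    rw [zero_add, pow_one, pow_zero, mul_one, ← Nat.cast_sum, Nat.Icc_one_eq_Ioc_zero,
      sum_Ioc_zeta]
    exact Nat.floor_le (by linarith)
  | succ K ih =>
    have hinner : ∀ d ∈ Icc 1 ⌊x⌋₊,
        ∑ m ∈ Icc 1 (⌊x⌋₊ / d), ((ζ ^ (K + 1)) m : ℝ) ≤ x / d * (1 + Real.log x) ^ K := by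
      intro d hd
      have hd1 : (1 : ℝ) ≤ d := by exact_mod_cast (mem_Icc.1 hd).1
      have hdx : (d : ℝ) ≤ x := (Nat.cast_le.2 (mem_Icc.1 hd).2).trans (Nat.floor_le (by linarith))
      have hxd : 1 ≤ x / d := (one_le_div (by linarith)).2 hdx
      have hlog_nonneg : 0 ≤ Real.log (x / d) := Real.log_nonneg hxd
      have hlog_le : Real.log (x / d) ≤ Real.log x :=
        Real.log_le_log (by linarith) (div_le_self (by linarith) hd1)
      rw [← Nat.floor_div_natCast]
      refine (ih hxd).trans ?_
      gcongr
    calc ∑ n ∈ Icc 1 ⌊x⌋₊, ((ζ ^ (K + 1 + 1)) n : ℝ)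
        = ∑ d ∈ Icc 1 ⌊x⌋₊, ∑ m ∈ Icc 1 (⌊x⌋₊ / d), ((ζ ^ (K + 1)) m : ℝ) := by
          rw [pow_succ', sum_Icc_zeta_mul_apply]
      _ ≤ ∑ d ∈ Icc 1 ⌊x⌋₊, x / d * (1 + Real.log x) ^ K := sum_le_sum hinner
      _ = x * (1 + Real.log x) ^ K * ∑ d ∈ Icc 1 ⌊x⌋₊, (d : ℝ)⁻¹ := by
          rw [mul_sum]
          exact sum_congr rfl fun d _ => by ring
      _ ≤ x * (1 + Real.log x) ^ K * (1 + Real.log x) := by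
          have := Real.log_nonneg hx
          gcongr
          exact sum_Icc_inv_le_one_add_log hx
      _ = x * (1 + Real.log x) ^ (K + 1) := by rw [pow_succ, mul_assoc]

end ArithmeticFunction

theorem tauk_eq_zeta_pow_apply (k n : ℕ) : tauk k n = (ζ ^ k) n := by
  rw [ArithmeticFunction.zeta_pow_apply, tauk]
  congr 1
  ext f
  simp only [mem_filter, Fintype.mem_piFinset, mem_Icc, Nat.mem_finMulAntidiag]
  constructor
  · rintro ⟨hf, rfl⟩
    exact ⟨rfl, prod_ne_zero_iff.2 fun i _ => Nat.one_le_iff_ne_zero.1 (hf i).1⟩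
  · rintro ⟨rfl, hn⟩
    refine ⟨fun i => ⟨Nat.one_le_iff_ne_zero.2 fun h => hn (prod_eq_zero (mem_univ i) h), ?_⟩, rfl⟩
    exact Nat.le_of_dvd (Nat.pos_of_ne_zero hn) (dvd_prod_of_mem f (mem_univ i))

theorem sum_tauk_pow_le_general (k s : ℕ) (hk : 1 ≤ k) (M : ℝ) (hM : 3 ≤ M) :
    ∑ m ∈ Finset.Icc 1 ⌊M⌋₊, (tauk k m : ℝ) ^ s ≤ M * (2 * Real.log M) ^ (k ^ s - 1) := by
  obtain ⟨K, hK⟩ : ∃ K, k ^ s = K + 1 := Nat.exists_eq_add_of_le' (Nat.one_le_pow s k hk)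
  have hlog : 1 ≤ Real.log M := by
    rw [Real.le_log_iff_exp_le (by linarith)]
    exact Real.exp_one_lt_d9.le.trans (by norm_num; linarith)
  calc ∑ m ∈ Icc 1 ⌊M⌋₊, (tauk k m : ℝ) ^ s
      ≤ ∑ m ∈ Icc 1 ⌊M⌋₊, ((ζ ^ (K + 1)) m : ℝ) := by
        refine sum_le_sum fun m hm => ?_
        rw [tauk_eq_zeta_pow_apply, ← hK]
        exact_mod_cast ArithmeticFunction.zeta_pow_apply_pow_le
          (Nat.one_le_iff_ne_zero.1 (mem_Icc.1 hm).1) k s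
    _ ≤ M * (1 + Real.log M) ^ K := ArithmeticFunction.sum_Icc_zeta_pow_succ_le K (by linarith)
    _ ≤ M * (2 * Real.log M) ^ (k ^ s - 1) := by
        rw [hK, Nat.add_sub_cancel]
        gcongr
        linarith

theorem sum_tauk_pow_le (k s : ℕ) (hk : 1 ≤ k) (hs : 1 ≤ s) (M : ℝ) (hM : 3 ≤ M) :
    ∑ m ∈ Finset.Icc 1 ⌊M⌋₊, (tauk k m : ℝ) ^ s ≤ M * (2 * Real.log M) ^ (k ^ s - 1) :=
  sum_tauk_pow_le_general k s hk M hM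
end

section
/- Fix α ∈ (0,1). There is a constant K_α > 0 such that for all natural numbers k, M ≥ 10 with k ≤ (log M)^α / (log log M)^3, one has ∑_{m ≤ M, Ω(m) > (log M)^α} τ_k(m) ≤ K_α · M · exp( −(log M)^α / (4 log log M) ). -/
/-!
Rankin's trick with weight `(3/2)^Ω(m) / m`: every `m ≤ M` with `Ω(m) > L := (log M)^α`
satisfies `1 ≤ (M / m) (3/2)^(Ω(m) - L)`, so the sum is at most
`M (3/2)^(-L) ∑_{m ≤ M} τ_k(m) (3/2)^Ω(m) / m ≤ M (3/2)^(-L) (∑_{n ≤ M} (3/2)^Ω(n) / n)^k`.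
The Euler product bounds the inner sum by `exp (3 ∑_{p ≤ M} 1/p)`, and Chebyshev's bound
`θ(x) ≤ x log 4` on dyadic blocks gives `∑_{p ≤ M} 1/p ≤ 4 log log M + 8`. Since
`k ≤ L / (log log M)^3`, the loss `exp (k (12 log log M + 24))` is dominated by `(3/2)^(-L)` up
to the factor `exp (-L / (4 log log M))`, except when `log log M` is bounded, which the constant
absorbs.
-/

open Finset

/-- `Ω(n)`: the number of prime factors of `n` counted with multiplicity. -/
def bigOmega (n : ℕ) : ℕ := n.primeFactorsList.length

theorem bigOmega_eq_cardFactors (n : ℕ) : bigOmega n = ArithmeticFunction.cardFactors n :=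
  ArithmeticFunction.cardFactors_apply.symm

noncomputable def omegaWeight (c : ℝ) : ℕ →* ℝ where
  toFun n := c ^ bigOmega n / n
  map_one' := by simp [bigOmega]
  map_mul' m n := by
    rcases eq_or_ne m 0 with rfl | hm
    · simp
    rcases eq_or_ne n 0 with rfl | hn
    · simp
    simp only [bigOmega_eq_cardFactors, ArithmeticFunction.cardFactors_mul hm hn, pow_add,
      Nat.cast_mul, mul_div_mul_comm]

theorem omegaWeight_apply (c : ℝ) (n : ℕ) : omegaWeight c n = c ^ bigOmega n / n := rfl

theorem omegaWeight_nonneg {c : ℝ} (hc : 0 ≤ c) (n : ℕ) : 0 ≤ omegaWeight c n := by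
  rw [omegaWeight_apply]; positivity

theorem omegaWeight_prime (c : ℝ) {p : ℕ} (hp : p.Prime) : omegaWeight c p = c / p := by
  rw [omegaWeight_apply, bigOmega_eq_cardFactors, ArithmeticFunction.cardFactors_apply_prime hp,
    pow_one]

theorem sum_Icc_le_prod_primesLE {f : ℕ →* ℝ} (hf0 : ∀ n, 0 ≤ f n)
    (hf1 : ∀ p, p.Prime → f p < 1) (M : ℕ) :
    ∑ n ∈ Icc 1 M, f n ≤ ∏ p ∈ Nat.primesLE M, (1 - f p)⁻¹ := by
  have hsum := (EulerProduct.summable_and_hasSum_smoothNumbers_prod_primesBelow_geometric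
    (f := f) (fun hp => by rw [Real.norm_of_nonneg (hf0 _)]; exact hf1 _ hp) (M + 1)).2
  replace hsum := (hasSum_subtype_iff_indicator (f := ⇑f)).mp hsum
  calc ∑ n ∈ Icc 1 M, f n
      = ∑ n ∈ Icc 1 M, ((M + 1).smoothNumbers : Set ℕ).indicator f n := by
        refine sum_congr rfl fun n hn => (Set.indicator_of_mem ?_ _).symm
        rw [mem_Icc] at hn
        exact Nat.mem_smoothNumbers_of_lt hn.1 (Nat.lt_succ_of_le hn.2)
    _ ≤ ∏ p ∈ Nat.primesLE M, (1 - f p)⁻¹ :=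
        sum_le_hasSum _ (fun n _ => Set.indicator_nonneg (fun m _ => hf0 m) n) hsum

theorem inv_one_sub_le_exp_two_mul {x : ℝ} (hx0 : 0 ≤ x) (hx : x ≤ 1 / 2) :
    (1 - x)⁻¹ ≤ Real.exp (2 * x) := by
  calc (1 - x)⁻¹ ≤ 1 + 2 * x := by
        rw [inv_le_iff_one_le_mul₀ (by linarith)]; nlinarith
    _ ≤ Real.exp (2 * x) := by linarith [Real.add_one_le_exp (2 * x)]

theorem inv_one_sub_three_halves_div_prime_le {p : ℕ} (hp : p.Prime) :
    (1 - 3 / 2 / (p : ℝ))⁻¹ ≤ Real.exp (3 / p) := by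
  rcases hp.eq_two_or_odd with rfl | hodd
  · have : (4 : ℝ) ≤ Real.exp (3 / 2) := by
      have h1 := Real.exp_one_gt_d9
      have h2 := Real.add_one_le_exp (1 / 2 : ℝ)
      rw [show (3 / 2 : ℝ) = 1 + 1 / 2 by norm_num, Real.exp_add]
      nlinarith
    norm_num; linarith
  · have hp3 : (3 : ℝ) ≤ p := by
      have := hp.two_le
      exact_mod_cast (show 3 ≤ p by omega)
    convert inv_one_sub_le_exp_two_mul (x := 3 / 2 / p) (by positivity)
      (by rw [div_le_div_iff₀ (by positivity) (by norm_num)]; linarith) using 2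
    ring

theorem sum_omegaWeight_le_exp (M : ℕ) :
    ∑ n ∈ Icc 1 M, omegaWeight (3 / 2) n ≤ Real.exp (3 * ∑ p ∈ Nat.primesLE M, (1 / p : ℝ)) := by
  have hprime : ∀ p, p.Prime → omegaWeight (3 / 2) p < 1 := fun p hp => by
    have h2 : (2 : ℝ) ≤ p := by exact_mod_cast hp.two_le
    rw [omegaWeight_prime _ hp, div_lt_one (by positivity)]
    linarith
  calc ∑ n ∈ Icc 1 M, omegaWeight (3 / 2) n
      ≤ ∏ p ∈ Nat.primesLE M, (1 - omegaWeight (3 / 2) p)⁻¹ :=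
        sum_Icc_le_prod_primesLE (omegaWeight_nonneg (by norm_num)) hprime M
    _ ≤ ∏ p ∈ Nat.primesLE M, Real.exp (3 / p) := by
        refine prod_le_prod (fun p hp => ?_) (fun p hp => ?_) <;>
          have hp := (Nat.mem_primesLE.mp hp).2
        · exact inv_nonneg.mpr (sub_nonneg.mpr (hprime p hp).le)
        · rw [omegaWeight_prime _ hp]; exact inv_one_sub_three_halves_div_prime_le hp
    _ = Real.exp (3 * ∑ p ∈ Nat.primesLE M, (1 / p : ℝ)) := by
        rw [← Real.exp_sum, mul_sum]; simp only [mul_one_div]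

theorem sum_inv_primesLE_filter_log_eq_le (M : ℕ) {j : ℕ} (hj : 1 ≤ j) :
    ∑ p ∈ Nat.primesLE M with Nat.log 2 p = j, (1 / p : ℝ) ≤ 4 / j := by
  set B := {p ∈ Nat.primesLE M | Nat.log 2 p = j}
  have hmem : ∀ p ∈ B, p.Prime ∧ 2 ^ j ≤ p ∧ p < 2 ^ (j + 1) := fun p hp => by
    obtain ⟨hpM, hlog⟩ := mem_filter.mp hp
    have hp := (Nat.mem_primesLE.mp hpM).2
    exact ⟨hp, hlog ▸ Nat.pow_log_le_self 2 hp.ne_zero,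
      hlog ▸ Nat.lt_pow_succ_log_self one_lt_two p⟩
  have hterm : ∀ p ∈ B, (j * Real.log 2) * (1 / p : ℝ) ≤ Real.log p / 2 ^ j := fun p hp => by
    obtain ⟨hp, hlow, -⟩ := hmem p hp
    have hlow' : (2 : ℝ) ^ j ≤ p := by exact_mod_cast hlow
    have hlog : j * Real.log 2 ≤ Real.log p := by
      rw [← Real.log_pow]; exact Real.log_le_log (by positivity) hlow'
    rw [mul_one_div]
    exact div_le_div₀ (Real.log_nonneg (by exact_mod_cast hp.one_le)) hlog (by positivity) hlow'
  have htheta : ∑ p ∈ B, Real.log p ≤ Chebyshev.theta (2 ^ (j + 1) : ℕ) := by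
    rw [Chebyshev.theta_eq_sum_primesLE_log]
    refine sum_le_sum_of_subset_of_nonneg (fun p hp => ?_) fun p _ _ => Real.log_natCast_nonneg p
    obtain ⟨hp, -, hhigh⟩ := hmem p hp
    exact Nat.mem_primesLE.mpr ⟨hhigh.le, hp⟩
  have hlog2 : 0 < Real.log 2 := Real.log_pos one_lt_two
  have hj' : (0 : ℝ) < j := by exact_mod_cast hj
  have hsum : (j * Real.log 2) * ∑ p ∈ B, (1 / p : ℝ) ≤ 4 * Real.log 2 :=
    calc (j * Real.log 2) * ∑ p ∈ B, (1 / p : ℝ)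
        ≤ ∑ p ∈ B, Real.log p / 2 ^ j := by rw [mul_sum]; exact sum_le_sum hterm
      _ ≤ Chebyshev.theta (2 ^ (j + 1) : ℕ) / 2 ^ j := by
        rw [← sum_div]; gcongr
      _ ≤ Real.log 4 * 2 ^ (j + 1) / 2 ^ j := by
        gcongr; exact_mod_cast Chebyshev.theta_le_log4_mul_x (by positivity)
      _ = 4 * Real.log 2 := by
        rw [show (4 : ℝ) = 2 ^ 2 by norm_num, Real.log_pow, pow_succ]; field_simp; ring
  rw [le_div_iff₀ hj']
  nlinarith

theorem sum_inv_primesLE_le {M : ℕ} (hM : 2 ≤ M) :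
    ∑ p ∈ Nat.primesLE M, (1 / p : ℝ) ≤ 4 * Real.log (Real.log M) + 8 := by
  set J := Nat.log 2 M
  have hJ : 1 ≤ J := Nat.le_log_of_pow_le one_lt_two (by simpa using hM)
  have hmaps : ∀ p ∈ Nat.primesLE M, Nat.log 2 p ∈ Icc 1 J := fun p hp => by
    obtain ⟨hpM, hp⟩ := Nat.mem_primesLE.mp hp
    exact mem_Icc.mpr ⟨Nat.log_pos one_lt_two hp.two_le, Nat.log_mono_right hpM⟩
  have hlogM : 0 < Real.log M := Real.log_pos (by exact_mod_cast hM)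
  have hJlog : (J : ℝ) ≤ 2 * Real.log M := by
    have h := Real.log_le_log (by positivity)
      (show ((2 ^ J : ℕ) : ℝ) ≤ M by exact_mod_cast Nat.pow_log_le_self 2 (by omega))
    rw [Nat.cast_pow, Real.log_pow, Nat.cast_ofNat] at h
    nlinarith [Real.log_two_gt_d9]
  have hlogJ : Real.log J ≤ 1 + Real.log (Real.log M) :=
    calc Real.log J ≤ Real.log (2 * Real.log M) :=
          Real.log_le_log (by exact_mod_cast hJ) hJlog
      _ = Real.log 2 + Real.log (Real.log M) := Real.log_mul two_ne_zero hlogM.ne'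
      _ ≤ 1 + Real.log (Real.log M) := by linarith [Real.log_two_lt_d9]
  calc ∑ p ∈ Nat.primesLE M, (1 / p : ℝ)
      = ∑ j ∈ Icc 1 J, ∑ p ∈ Nat.primesLE M with Nat.log 2 p = j, (1 / p : ℝ) :=
        (sum_fiberwise_of_maps_to hmaps _).symm
    _ ≤ ∑ j ∈ Icc 1 J, (4 / j : ℝ) :=
        sum_le_sum fun j hj => sum_inv_primesLE_filter_log_eq_le M (mem_Icc.mp hj).1
    _ = 4 * (harmonic J : ℝ) := by
        rw [harmonic_eq_sum_Icc]; push_cast; rw [mul_sum]; simp only [div_eq_mul_inv]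
    _ ≤ 4 * (1 + Real.log J) := by gcongr; exact harmonic_le_one_add_log J
    _ ≤ 4 * Real.log (Real.log M) + 8 := by linarith

theorem tauk_eq_card_piFinset_Icc (k : ℕ) {m M : ℕ} (hm : 1 ≤ m) (hmM : m ≤ M) :
    tauk k m = #{f ∈ Fintype.piFinset fun _ : Fin k => Icc 1 M | ∏ i, f i = m} := by
  unfold tauk
  congr 1
  ext f
  simp only [mem_filter, Fintype.mem_piFinset, mem_Icc, and_congr_left_iff]
  rintro rfl
  refine forall_congr' fun i => and_congr_right fun hfi => ⟨fun h => h.trans hmM, fun _ => ?_⟩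
  exact Nat.le_of_dvd (by omega) (dvd_prod_of_mem f (mem_univ i))

theorem sum_tauk_mul_le_pow_sum {w : ℕ →* ℝ} (hw : ∀ n, 0 ≤ w n) (k M : ℕ) :
    ∑ m ∈ Icc 1 M, (tauk k m : ℝ) * w m ≤ (∑ n ∈ Icc 1 M, w n) ^ k := by
  set T := Fintype.piFinset fun _ : Fin k => Icc 1 M
  calc ∑ m ∈ Icc 1 M, (tauk k m : ℝ) * w m
      = ∑ m ∈ Icc 1 M, ∑ f ∈ T with ∏ i, f i = m, w m := by
        refine sum_congr rfl fun m hm => ?_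
        rw [mem_Icc] at hm
        rw [tauk_eq_card_piFinset_Icc k hm.1 hm.2, sum_const, nsmul_eq_mul]
    _ = ∑ f ∈ T with ∏ i, f i ∈ Icc 1 M, w (∏ i, f i) := sum_fiberwise_eq_sum_filter' ..
    _ ≤ ∑ f ∈ T, w (∏ i, f i) :=
        sum_le_sum_of_subset_of_nonneg (filter_subset _ _) fun _ _ _ => hw _
    _ = (∑ n ∈ Icc 1 M, w n) ^ k := by
        rw [← Fin.prod_const, prod_univ_sum]
        exact sum_congr rfl fun f _ => map_prod w f univ

theorem sum_tauk_filter_lt_bigOmega_le {c : ℝ} (hc : 1 ≤ c) (L : ℝ) (k M : ℕ) :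
    ∑ m ∈ Icc 1 M with L < (bigOmega m : ℝ), (tauk k m : ℝ) ≤
      M * c ^ (-L) * (∑ n ∈ Icc 1 M, omegaWeight c n) ^ k := by
  have hweight : ∀ m ∈ Icc 1 M, L < (bigOmega m : ℝ) → 1 ≤ M * c ^ (-L) * omegaWeight c m :=
    fun m hm hL => by
      rw [mem_Icc] at hm
      have hm0 : (0 : ℝ) < m := by exact_mod_cast hm.1
      have hMm : (1 : ℝ) ≤ M / m := by rw [one_le_div hm0]; exact_mod_cast hm.2
      have hc : 1 ≤ c ^ (-L) * c ^ bigOmega m := by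
        rw [← Real.rpow_natCast, ← Real.rpow_add (by linarith)]
        exact Real.one_le_rpow hc (by linarith)
      calc (1 : ℝ) ≤ M / m * (c ^ (-L) * c ^ bigOmega m) := one_le_mul_of_one_le_of_one_le hMm hc
        _ = M * c ^ (-L) * omegaWeight c m := by rw [omegaWeight_apply]; ring
  have hc0 : 0 ≤ c := by linarith
  calc ∑ m ∈ Icc 1 M with L < (bigOmega m : ℝ), (tauk k m : ℝ)
      ≤ ∑ m ∈ Icc 1 M with L < (bigOmega m : ℝ), tauk k m * (M * c ^ (-L) * omegaWeight c m) :=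
        sum_le_sum fun m hm => by
          obtain ⟨hmM, hL⟩ := mem_filter.mp hm
          exact le_mul_of_one_le_right (Nat.cast_nonneg _) (hweight m hmM hL)
    _ = M * c ^ (-L) * ∑ m ∈ Icc 1 M with L < (bigOmega m : ℝ), tauk k m * omegaWeight c m := by
        rw [mul_sum]; exact sum_congr rfl fun _ _ => by ring
    _ ≤ M * c ^ (-L) * ∑ m ∈ Icc 1 M, tauk k m * omegaWeight c m := by
        gcongr
        · exact fun m _ _ => mul_nonneg (Nat.cast_nonneg _) (omegaWeight_nonneg hc0 m)
        · exact filter_subset _ _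
    _ ≤ M * c ^ (-L) * (∑ n ∈ Icc 1 M, omegaWeight c n) ^ k := by
        gcongr; exact sum_tauk_mul_le_pow_sum (omegaWeight_nonneg hc0) k M

theorem rankin_exponent_le {k L X : ℝ} (hX : 1 / 2 ≤ X) (hk : 0 ≤ k) (hkL : k * X ^ 3 ≤ L)
    (hLX : L ≤ Real.exp X) :
    k * (12 * X + 24) - L * Real.log (3 / 2) ≤ 6000 * Real.exp 60 - L / (4 * X) := by
  have hL : 0 ≤ L := le_trans (by positivity) hkL
  have hlog : 1 / 3 ≤ Real.log (3 / 2) := by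
    have := Real.one_sub_inv_le_log_of_pos (x := 3 / 2) (by norm_num)
    norm_num at this ⊢; linarith
  have he60 : 0 < Real.exp 60 := Real.exp_pos 60
  have hLlog : 0 ≤ L * Real.log (3 / 2) := mul_nonneg hL (by linarith)
  -- For `X ≥ 60`, `k X ^ 3 ≤ L` gives `k (12 X + 24) + L / (4 X) ≤ L / 3`; for `X < 60`,
  -- `L ≤ exp 60` and `k ≤ 8 L` bound the left side by `6000 exp 60`.
  rcases le_or_gt 60 X with hX60 | hX60
  · have hX2 : (3600 : ℝ) ≤ X ^ 2 := by nlinarith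
    have hkX : k * X * 3600 ≤ L := by
      have := mul_le_mul_of_nonneg_left hX2 (mul_nonneg hk (by linarith : (0 : ℝ) ≤ X))
      nlinarith
    have hk' : k * 216000 ≤ L := by
      have := mul_le_mul_of_nonneg_left (show (216000 : ℝ) ≤ X ^ 3 by nlinarith) hk
      linarith
    have hLX' : L / (4 * X) ≤ L / 240 := div_le_div_of_nonneg_left hL (by norm_num) (by linarith)
    nlinarith
  · have hL60 : L ≤ Real.exp 60 := hLX.trans (Real.exp_le_exp.mpr hX60.le)
    have hk8 : k ≤ 8 * L := by
      have := mul_le_mul_of_nonneg_left (show (1 / 8 : ℝ) ≤ X ^ 3 by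
        nlinarith [pow_le_pow_left₀ (by norm_num) hX 3]) hk
      linarith
    have hLX' : L / (4 * X) ≤ L / 2 := div_le_div_of_nonneg_left hL (by norm_num) (by linarith)
    nlinarith

theorem sum_tauk_irregular_general (α : ℝ) (hα1 : α < 1) :
    ∃ Kα : ℝ, 0 < Kα ∧
      ∀ k M : ℕ, 10 ≤ k → 10 ≤ M →
        (k : ℝ) ≤ Real.log M ^ α / Real.log (Real.log M) ^ (3 : ℕ) →
        ∑ m ∈ (Finset.Icc 1 M).filter
            (fun m => Real.log M ^ α < (bigOmega m : ℝ)), (tauk k m : ℝ) ≤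
          Kα * M * Real.exp (-(Real.log M ^ α) / (4 * Real.log (Real.log M))) := by
  refine ⟨Real.exp (6000 * Real.exp 60), Real.exp_pos _, fun k M _ hM hk => ?_⟩
  set L := Real.log M ^ α
  set X := Real.log (Real.log M)
  have hlogM : 2 ≤ Real.log M := by
    have h8 : Real.log 8 ≤ Real.log M :=
      Real.log_le_log (by norm_num) (by exact_mod_cast (by omega : 8 ≤ M))
    rw [show (8 : ℝ) = 2 ^ 3 by norm_num, Real.log_pow, Nat.cast_ofNat] at h8
    linarith [Real.log_two_gt_d9]
  have hX : 1 / 2 ≤ X := by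
    linarith [Real.log_two_gt_d9, Real.log_le_log two_pos hlogM]
  have hLX : L ≤ Real.exp X := by
    rw [Real.exp_log (by linarith)]
    exact Real.rpow_le_self_of_one_le (by linarith) hα1.le
  have hkL : k * X ^ 3 ≤ L := by rwa [le_div_iff₀ (by positivity)] at hk
  have hweight : ∑ n ∈ Icc 1 M, omegaWeight (3 / 2) n ≤ Real.exp (12 * X + 24) :=
    (sum_omegaWeight_le_exp M).trans <| Real.exp_le_exp.mpr <| by
      linarith [sum_inv_primesLE_le (M := M) (by omega)]
  calc ∑ m ∈ Icc 1 M with L < (bigOmega m : ℝ), (tauk k m : ℝ)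
      ≤ M * (3 / 2) ^ (-L) * (∑ n ∈ Icc 1 M, omegaWeight (3 / 2) n) ^ k :=
        sum_tauk_filter_lt_bigOmega_le (by norm_num) L k M
    _ ≤ M * (3 / 2) ^ (-L) * Real.exp (12 * X + 24) ^ k := by
        gcongr
        exact sum_nonneg fun n _ => omegaWeight_nonneg (by norm_num) n
    _ = M * Real.exp (k * (12 * X + 24) - L * Real.log (3 / 2)) := by
        rw [Real.rpow_def_of_pos (by norm_num), ← Real.exp_nat_mul, mul_assoc, ← Real.exp_add]
        ring_nf
    _ ≤ M * Real.exp (6000 * Real.exp 60 - L / (4 * X)) := by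
        gcongr _ * Real.exp ?_; exact rankin_exponent_le hX k.cast_nonneg hkL hLX
    _ = Real.exp (6000 * Real.exp 60) * M * Real.exp (-L / (4 * X)) := by
        rw [sub_eq_add_neg, Real.exp_add, neg_div]; ring

theorem sum_tauk_irregular (α : ℝ) (hα0 : 0 < α) (hα1 : α < 1) :
    ∃ Kα : ℝ, 0 < Kα ∧
      ∀ k M : ℕ, 10 ≤ k → 10 ≤ M →
        (k : ℝ) ≤ Real.log M ^ α / Real.log (Real.log M) ^ (3 : ℕ) →
        ∑ m ∈ (Finset.Icc 1 M).filter
            (fun m => Real.log M ^ α < (bigOmega m : ℝ)), (tauk k m : ℝ) ≤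
          Kα * M * Real.exp (-(Real.log M ^ α) / (4 * Real.log (Real.log M))) :=
  sum_tauk_irregular_general α hα1
end

section
/- There is an absolute constant K > 0 such that the following holds. Let k ≥ 1 be a natural number, T ≥ 1 a real number, N ≥ 3 a natural number, and a_1, …, a_N complex numbers; set d(t) = ∑_{n ≤ N} a_n n^{it}. Then sup_{|t| ≤ T} |d(t)| ≤ K · ( log N · (∑_{n ≤ N} |a_n|) · ∫_{−2T}^{2T} |d(t)|^{2k} dt )^{1/(2k+1)}. -/
open Finset

lemma abs_exp_I_sub_one (θ : ℝ) :
    ‖Complex.exp (θ * Complex.I) - 1‖ ≤ |θ| := by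
  have hsq : ‖Complex.exp (θ * Complex.I) - 1‖ ^ 2 = 2 - 2 * Real.cos θ := by
    rw [Complex.sq_norm, Complex.normSq_apply]
    simp [Complex.exp_ofReal_mul_I_re, Complex.exp_ofReal_mul_I_im]
    nlinarith [Real.sin_sq_add_cos_sq θ]
  have hcos := Real.one_sub_sq_div_two_le_cos (x := θ)
  nlinarith [norm_nonneg (Complex.exp (θ * Complex.I) - 1), abs_nonneg θ, sq_abs θ]

lemma abs_exp_I_sub_exp_I (x y : ℝ) :
    ‖Complex.exp (x * Complex.I) - Complex.exp (y * Complex.I)‖ ≤ |x - y| := by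
  have : Complex.exp ((x:ℂ) * Complex.I) - Complex.exp ((y:ℂ) * Complex.I)
      = Complex.exp ((y:ℂ) * Complex.I) * (Complex.exp (((x - y : ℝ) : ℂ) * Complex.I) - 1) := by
    rw [mul_sub, mul_one, ← Complex.exp_add]
    push_cast
    ring_nf
  rw [this, norm_mul, Complex.norm_exp_ofReal_mul_I, one_mul]
  exact abs_exp_I_sub_one (x - y)

lemma cpow_eq_exp {n : ℕ} (hn : 1 ≤ n) (s : ℝ) :
    (n : ℂ) ^ ((s : ℂ) * Complex.I) = Complex.exp (((s * Real.log n : ℝ) : ℂ) * Complex.I) := by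
  have hn0 : (n : ℂ) ≠ 0 := Nat.cast_ne_zero.mpr (by omega)
  rw [Complex.cpow_def_of_ne_zero hn0, ← Complex.natCast_log]
  push_cast
  ring_nf

theorem sup_dirichlet_poly_le_moment :
    ∃ K : ℝ, 0 < K ∧
      ∀ (k : ℕ), 1 ≤ k → ∀ (T : ℝ), 1 ≤ T → ∀ (N : ℕ), 3 ≤ N → ∀ (a : ℕ → ℂ),
      ∀ t : ℝ, |t| ≤ T →
        ‖∑ n ∈ Finset.Icc 1 N, a n * (n : ℂ) ^ ((t : ℂ) * Complex.I)‖ ≤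
          K * (Real.log N * (∑ n ∈ Finset.Icc 1 N, ‖a n‖) *
            ∫ t in (-(2 * T))..(2 * T),
              ‖∑ n ∈ Finset.Icc 1 N, a n * (n : ℂ) ^ ((t : ℂ) * Complex.I)‖ ^
                (2 * k)) ^ ((1 : ℝ) / (2 * k + 1)) := by
  refine ⟨2, by norm_num, ?_⟩
  intro k hk T hT N hN a t ht
  set D : ℝ → ℂ := fun s => ∑ n ∈ Finset.Icc 1 N,
    a n * Complex.exp (((s * Real.log n : ℝ) : ℂ) * Complex.I) with hDdef
  have hD : ∀ s : ℝ, (∑ n ∈ Finset.Icc 1 N, a n * (n : ℂ) ^ ((s : ℂ) * Complex.I)) = D s := by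
    intro s
    refine Finset.sum_congr rfl fun n hn => ?_
    rw [cpow_eq_exp (Finset.mem_Icc.mp hn).1]
  simp only [hD]
  set S : ℝ := ∑ n ∈ Finset.Icc 1 N, ‖a n‖ with hSdef
  set I₀ : ℝ := ∫ s in (-(2 * T))..(2 * T), ‖D s‖ ^ (2 * k) with hI₀def
  set M : ℝ := ‖D t‖ with hMdef
  set L : ℝ := Real.log N * S with hLdef
  clear_value D S I₀ M L
  -- basic nonnegativity / bounds
  have hS0 : 0 ≤ S := by
    rw [hSdef]; exact Finset.sum_nonneg fun n _ => norm_nonneg _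
  have hlogN : 1 ≤ Real.log N := by
    have h3 : (3 : ℝ) ≤ N := by exact_mod_cast hN
    have : Real.exp 1 ≤ 3 := by
      have := Real.exp_one_lt_d9
      linarith
    calc (1 : ℝ) = Real.log (Real.exp 1) := (Real.log_exp 1).symm
      _ ≤ Real.log N := Real.log_le_log (Real.exp_pos 1) (by linarith)
  -- continuity and integrability
  have hcont : Continuous fun s : ℝ => ‖D s‖ ^ (2 * k) := by
    simp only [hDdef]
    apply Continuous.pow
    apply continuous_norm.comp
    apply continuous_finset_sum
    intro n _
    exact continuous_const.mul (Complex.continuous_exp.comp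
      ((Complex.continuous_ofReal.comp (continuous_id.mul continuous_const)).mul continuous_const))
  have hTT : -(2 * T) ≤ 2 * T := by linarith
  have hI0 : 0 ≤ I₀ := by
    rw [hI₀def]
    exact intervalIntegral.integral_nonneg hTT fun s _ => pow_nonneg (norm_nonneg _) _
  have hL0 : 0 ≤ L := by
    rw [hLdef]; exact mul_nonneg (by linarith) hS0
  -- trivial case
  rcases le_or_gt M 0 with hM | hM
  · have : (0:ℝ) ≤ 2 * (L * I₀) ^ ((1 : ℝ) / (2 * k + 1)) := by
      have := Real.rpow_nonneg (mul_nonneg hL0 hI0) ((1 : ℝ) / (2 * k + 1))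
      linarith
    calc M ≤ 0 := hM
      _ ≤ _ := this
  -- main case
  have hMS : M ≤ S := by
    rw [hMdef, hSdef, hDdef]
    refine (norm_sum_le _ _).trans (le_of_eq (Finset.sum_congr rfl fun n hn => ?_))
    rw [norm_mul, Complex.norm_exp_ofReal_mul_I, mul_one]
  have hSpos : 0 < S := lt_of_lt_of_le hM hMS
  have hLpos : 0 < L := by
    rw [hLdef]; exact mul_pos (by linarith) hSpos
  have hSL : S ≤ L := by
    rw [hLdef]; exact le_mul_of_one_le_left hS0 hlogN
  set δ : ℝ := M / (2 * L) with hδdef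
  clear_value δ
  have hδpos : 0 < δ := by
    rw [hδdef]; exact div_pos hM (by linarith)
  have hδ1 : δ ≤ 1 := by
    rw [hδdef, div_le_one (by linarith)]
    linarith
  -- Lipschitz bound
  have hLip : ∀ s : ℝ, ‖D s - D t‖ ≤ |s - t| * L := by
    intro s
    simp only [hDdef, ← Finset.sum_sub_distrib, ← mul_sub]
    refine (norm_sum_le _ _).trans ?_
    rw [hLdef, hSdef, ← mul_assoc, Finset.mul_sum]
    refine Finset.sum_le_sum fun n hn => ?_
    rw [norm_mul]
    have hn1 : 1 ≤ n := (Finset.mem_Icc.mp hn).1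
    have hnN : n ≤ N := (Finset.mem_Icc.mp hn).2
    have hlogn0 : 0 ≤ Real.log n := Real.log_natCast_nonneg n
    have hlognN : Real.log n ≤ Real.log N :=
      Real.log_le_log (by exact_mod_cast hn1) (by exact_mod_cast hnN)
    have h1 : ‖Complex.exp (((s * Real.log n : ℝ) : ℂ) * Complex.I)
        - Complex.exp (((t * Real.log n : ℝ) : ℂ) * Complex.I)‖ ≤ |s - t| * Real.log n := by
      have := abs_exp_I_sub_exp_I (s * Real.log n) (t * Real.log n)
      calc _ ≤ |s * Real.log n - t * Real.log n| := this
        _ = |s - t| * Real.log n := by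
            rw [← sub_mul, abs_mul, abs_of_nonneg hlogn0]
    calc ‖a n‖ * ‖Complex.exp (((s * Real.log n : ℝ) : ℂ) * Complex.I)
          - Complex.exp (((t * Real.log n : ℝ) : ℂ) * Complex.I)‖
        ≤ ‖a n‖ * (|s - t| * Real.log n) :=
          mul_le_mul_of_nonneg_left h1 (norm_nonneg _)
      _ ≤ ‖a n‖ * (|s - t| * Real.log N) := by
          have := abs_nonneg (s - t)
          gcongr
      _ = |s - t| * Real.log ↑N * ‖a n‖ := by ring
  -- lower bound on |D s| on [t, t + δ]
  have hlow : ∀ s ∈ Set.Icc t (t + δ), (M / 2) ^ (2 * k) ≤ ‖D s‖ ^ (2 * k) := by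
    intro s hs
    have h1 : ‖D s - D t‖ ≤ δ * L := by
      refine (hLip s).trans ?_
      have habs : |s - t| ≤ δ := by
        rw [abs_of_nonneg (by linarith [hs.1])]
        linarith [hs.2]
      exact mul_le_mul_of_nonneg_right habs hLpos.le
    have hδL : δ * L = M / 2 := by
      rw [hδdef]
      field_simp
    have h3 : M - ‖D s‖ ≤ ‖D s - D t‖ := by
      have h4 := norm_sub_norm_le (D t) (D s)
      have h5 : ‖D s - D t‖ = ‖D t - D s‖ := by
        rw [← norm_neg]
        ring_nf
      rw [h5, hMdef]
      exact h4
    have h2 : M / 2 ≤ ‖D s‖ := by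
      rw [hδL] at h1
      linarith
    exact pow_le_pow_left₀ (by positivity) h2 _
  -- integral lower bound
  have hsub1 : -(2 * T) ≤ t := by
    have := abs_le.mp ht
    linarith [this.1]
  have hsub2 : t + δ ≤ 2 * T := by
    have := abs_le.mp ht
    linarith [this.2]
  have hIntAll : IntervalIntegrable (fun s => ‖D s‖ ^ (2 * k))
      MeasureTheory.volume (-(2 * T)) (2 * T) := hcont.intervalIntegrable _ _
  have key0 : δ * (M / 2) ^ (2 * k) ≤ I₀ := by
    have h4 : δ * (M / 2) ^ (2 * k) = ∫ _ in t..(t + δ), (M / 2) ^ (2 * k) := by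
      rw [intervalIntegral.integral_const]
      simp
    rw [h4, hI₀def]
    have h5 : (∫ _ in t..(t + δ), (M / 2) ^ (2 * k))
        ≤ ∫ s in t..(t + δ), ‖D s‖ ^ (2 * k) :=
      intervalIntegral.integral_mono_on (by linarith) intervalIntegrable_const
        (hcont.intervalIntegrable _ _) hlow
    refine h5.trans ?_
    exact intervalIntegral.integral_mono_interval hsub1 (by linarith) hsub2
      (Filter.Eventually.of_forall fun s => by positivity) hIntAll
  -- key polynomial inequality
  have key : M ^ (2 * k + 1) ≤ 2 ^ (2 * k + 1) * (L * I₀) := by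
    have expand : M ^ (2 * k + 1) = (2 ^ (2 * k + 1) * L) * (δ * (M / 2) ^ (2 * k)) := by
      rw [hδdef, div_pow]
      field_simp
      ring
    rw [expand]
    calc (2 ^ (2 * k + 1) * L) * (δ * (M / 2) ^ (2 * k))
        ≤ (2 ^ (2 * k + 1) * L) * I₀ := mul_le_mul_of_nonneg_left key0 (by positivity)
      _ = 2 ^ (2 * k + 1) * (L * I₀) := by ring
  -- conclude via rpow
  have hek : (0 : ℝ) < 2 * (k : ℝ) + 1 := by positivity
  have hcast : ((2 * k + 1 : ℕ) : ℝ) = 2 * (k : ℝ) + 1 := by push_cast; ring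
  calc M = (M ^ (2 * k + 1)) ^ ((1 : ℝ) / (2 * (k : ℝ) + 1)) := by
        rw [← Real.rpow_natCast M (2 * k + 1), ← Real.rpow_mul hM.le, hcast, mul_one_div,
          div_self hek.ne', Real.rpow_one]
    _ ≤ (2 ^ (2 * k + 1) * (L * I₀)) ^ ((1 : ℝ) / (2 * (k : ℝ) + 1)) :=
        Real.rpow_le_rpow (by positivity) key (by positivity)
    _ = 2 * (L * I₀) ^ ((1 : ℝ) / (2 * (k : ℝ) + 1)) := by
        rw [Real.mul_rpow (by positivity) (mul_nonneg hL0 hI0),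
          ← Real.rpow_natCast (2 : ℝ) (2 * k + 1), ← Real.rpow_mul (by norm_num : (0:ℝ) ≤ 2),
          hcast, mul_one_div, div_self hek.ne', Real.rpow_one]
end

section
/- Let (r_n)_{n ≥ 1} be a sequence of i.i.d. random variables, each uniformly distributed on the unit circle {z ∈ ℂ : |z| = 1}. Fix a real number C ≥ 1. Then there is a constant K > 0 (depending only on C) such that the probability of the event { sup_{|t| ≤ N^C} | ∑_{n ≤ N} r_n n^{it} | ≤ K · √(C · N · log N) } tends to 1 as N → ∞. -/
open MeasureTheory ProbabilityTheory Filter Finset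

/-- The uniform probability measure on the unit circle in `ℂ`. -/
noncomputable def uniformCircle : MeasureTheory.Measure ℂ :=
  (ENNReal.ofReal (2 * Real.pi))⁻¹ •
    (MeasureTheory.volume.restrict (Set.Ioc 0 (2 * Real.pi))).map (circleMap 0 1)

/-! For fixed `t`, the real and imaginary parts of `∑ rₙ n^{it}` are sums of independent, centred
random variables bounded by `1`, so Hoeffding's inequality gives
`P(‖∑ rₙ n^{it}‖ ≥ L) ≤ 4 exp(-L²/8N)`. In `t` the polynomial is `N log N`-Lipschitz, so its
supremum over `|t| ≤ N^C` is within `1` of its maximum over the `O(N^{C+2})` points of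
`N⁻² ℤ ∩ [-N^C, N^C]`. Taking `L = 6 √(C N log N)` makes each tail at most `4 N^{-(C+3)}`, and the
union bound over the grid leaves `20 / N`. -/

open Real
open scoped NNReal

lemma ae_norm_eq_one_uniformCircle : ∀ᵐ z ∂uniformCircle, ‖z‖ = 1 := by
  have hpre : circleMap 0 1 ⁻¹' {z : ℂ | ¬ ‖z‖ = 1} = ∅ := by
    ext θ; simp [norm_circleMap_zero]
  have hset : MeasurableSet {z : ℂ | ¬ ‖z‖ = 1} :=
    (measurableSet_eq_fun continuous_norm.measurable measurable_const).compl
  rw [ae_iff, uniformCircle, Measure.smul_apply,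
    Measure.map_apply (continuous_circleMap 0 1).measurable hset, hpre]
  simp

lemma integral_id_uniformCircle : ∫ z, z ∂uniformCircle = 0 := by
  have hcircle : ∀ θ : ℝ, circleMap 0 1 θ = Complex.exp (Complex.I * θ) := by
    intro θ; simp [circleMap, mul_comm]
  rw [uniformCircle, integral_smul_measure,
    integral_map (f := fun z : ℂ => z) (continuous_circleMap 0 1).measurable.aemeasurable
      aestronglyMeasurable_id,
    ← intervalIntegral.integral_of_le (by positivity)]
  simp_rw [hcircle]
  rw [integral_exp_mul_complex Complex.I_ne_zero,
    show Complex.I * ((2 * π : ℝ) : ℂ) = 2 * π * Complex.I by push_cast; ring,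
    Complex.exp_two_pi_mul_I]
  simp

section UniformCircleLaw

variable {Ω : Type*} [MeasurableSpace Ω] {μ : Measure Ω} {X : Ω → ℂ}

lemma ae_norm_eq_one_of_map_eq_uniformCircle (hX : AEMeasurable X μ)
    (hlaw : μ.map X = uniformCircle) : ∀ᵐ ω ∂μ, ‖X ω‖ = 1 :=
  (ae_map_iff hX (measurableSet_eq_fun continuous_norm.measurable measurable_const)).mp
    (hlaw ▸ ae_norm_eq_one_uniformCircle)

lemma integral_eq_zero_of_map_eq_uniformCircle (hX : AEMeasurable X μ)
    (hlaw : μ.map X = uniformCircle) : ∫ ω, X ω ∂μ = 0 := by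
  rw [← integral_map (f := fun z : ℂ => z) hX aestronglyMeasurable_id, hlaw,
    integral_id_uniformCircle]

end UniformCircleLaw

lemma ProbabilityTheory.HasSubgaussianMGF.measureReal_le_abs_le {Ω : Type*} [MeasurableSpace Ω]
    {μ : Measure Ω} {X : Ω → ℝ} {c : ℝ≥0} (h : HasSubgaussianMGF X c μ) {ε : ℝ} (hε : 0 ≤ ε) :
    μ.real {ω | ε ≤ |X ω|} ≤ 2 * exp (-ε ^ 2 / (2 * c)) := by
  have hsplit : {ω | ε ≤ |X ω|} = {ω | ε ≤ X ω} ∪ {ω | ε ≤ (-X) ω} := by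
    ext ω; simp [le_abs]
  calc μ.real {ω | ε ≤ |X ω|} ≤ μ.real {ω | ε ≤ X ω} + μ.real {ω | ε ≤ (-X) ω} :=
        hsplit ▸ measureReal_union_le _ _
    _ ≤ 2 * exp (-ε ^ 2 / (2 * c)) := by
        linarith [h.measure_ge_le hε, h.neg.measure_ge_le hε]

section BoundedCentered

variable {Ω ι : Type*} [MeasurableSpace Ω] {μ : Measure Ω} [IsProbabilityMeasure μ]

lemma hasSubgaussianMGF_re_mul {Y : Ω → ℂ} (hY : AEMeasurable Y μ)
    (hnorm : ∀ᵐ ω ∂μ, ‖Y ω‖ ≤ 1) (hmean : ∫ ω, Y ω ∂μ = 0) {c : ℂ} (hc : ‖c‖ ≤ 1) :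
    HasSubgaussianMGF (fun ω ↦ (Y ω * c).re) 1 μ := by
  have hint : Integrable Y μ := Integrable.of_bound hY.aestronglyMeasurable 1 hnorm
  have hIcc : ∀ᵐ ω ∂μ, (Y ω * c).re ∈ Set.Icc (-1) 1 := by
    filter_upwards [hnorm] with ω hω
    exact abs_le.mp <| (Complex.abs_re_le_norm _).trans <|
      (norm_mul _ _).trans_le (mul_le_one₀ hω (norm_nonneg _) hc)
  have hmean' : ∫ ω, (Y ω * c).re ∂μ = 0 := by
    have := integral_re (hint.mul_const c)
    simp only [RCLike.re_to_complex] at this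
    rw [this, integral_mul_const, hmean, zero_mul, Complex.zero_re]
  have hone : (‖(1 : ℝ) - -1‖₊ / 2) ^ 2 = 1 := by rw [← NNReal.coe_inj]; norm_num
  simpa only [hone] using hasSubgaussianMGF_of_mem_Icc_of_integral_eq_zero
    (X := fun ω ↦ (Y ω * c).re) (Complex.measurable_re.comp_aemeasurable (hY.mul_const c))
    hIcc hmean'

variable {r : ι → Ω → ℂ}

lemma hasSubgaussianMGF_sum_re_mul (hmeas : ∀ i, AEMeasurable (r i) μ) (hindep : iIndepFun r μ)
    (hnorm : ∀ i, ∀ᵐ ω ∂μ, ‖r i ω‖ ≤ 1) (hmean : ∀ i, ∫ ω, r i ω ∂μ = 0)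
    (s : Finset ι) {c : ι → ℂ} (hc : ∀ i ∈ s, ‖c i‖ ≤ 1) :
    HasSubgaussianMGF (fun ω ↦ ∑ i ∈ s, (r i ω * c i).re) #s μ := by
  have hindep' : iIndepFun (fun i ω ↦ (r i ω * c i).re) μ :=
    hindep.comp (fun i z ↦ (z * c i).re)
      (fun i ↦ Complex.measurable_re.comp (measurable_mul_const (c i)))
  simpa using HasSubgaussianMGF.sum_of_iIndepFun hindep' (c := fun _ ↦ 1)
    (fun i hi ↦ hasSubgaussianMGF_re_mul (hmeas i) (hnorm i) (hmean i) (hc i hi))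

lemma measureReal_le_norm_sum_mul_le (hmeas : ∀ i, AEMeasurable (r i) μ)
    (hindep : iIndepFun r μ) (hnorm : ∀ i, ∀ᵐ ω ∂μ, ‖r i ω‖ ≤ 1)
    (hmean : ∀ i, ∫ ω, r i ω ∂μ = 0) (s : Finset ι) {c : ι → ℂ} (hc : ∀ i ∈ s, ‖c i‖ ≤ 1)
    {L : ℝ} (hL : 0 ≤ L) :
    μ.real {ω | L ≤ ‖∑ i ∈ s, r i ω * c i‖} ≤ 4 * exp (-L ^ 2 / (8 * #s)) := by
  have hc' : ∀ i ∈ s, ‖c i * -Complex.I‖ ≤ 1 := by simpa using hc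
  have hre := (hasSubgaussianMGF_sum_re_mul hmeas hindep hnorm hmean s hc).measureReal_le_abs_le
    (ε := L / 2) (by positivity)
  have him := (hasSubgaussianMGF_sum_re_mul hmeas hindep hnorm hmean s hc').measureReal_le_abs_le
    (ε := L / 2) (by positivity)
  have hsub : {ω | L ≤ ‖∑ i ∈ s, r i ω * c i‖} ⊆
      {ω | L / 2 ≤ |∑ i ∈ s, (r i ω * c i).re|} ∪
        {ω | L / 2 ≤ |∑ i ∈ s, (r i ω * (c i * -Complex.I)).re|} := by
    intro ω hω
    have hre_sum := Complex.re_sum s (fun i ↦ r i ω * c i)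
    have him_sum : (∑ i ∈ s, r i ω * c i).im = ∑ i ∈ s, (r i ω * (c i * -Complex.I)).re := by
      rw [Complex.im_sum]; congr 1; ext i; simp [← mul_assoc]
    have := (Complex.norm_le_abs_re_add_abs_im (∑ i ∈ s, r i ω * c i)).trans' hω
    rw [Set.mem_union, Set.mem_ofPred_eq, Set.mem_ofPred_eq, ← hre_sum, ← him_sum]
    by_contra! h
    linarith [h.1, h.2]
  calc μ.real {ω | L ≤ ‖∑ i ∈ s, r i ω * c i‖}
      ≤ 2 * exp (-(L / 2) ^ 2 / (2 * #s)) + 2 * exp (-(L / 2) ^ 2 / (2 * #s)) := by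
        push_cast at hre him
        exact (measureReal_mono hsub).trans ((measureReal_union_le _ _).trans (add_le_add hre him))
    _ = 4 * exp (-L ^ 2 / (8 * #s)) := by ring_nf

end BoundedCentered

noncomputable def dirichletPoly (a : ℕ → ℂ) (N : ℕ) (t : ℝ) : ℂ :=
  ∑ n ∈ Icc 1 N, a n * (n : ℂ) ^ ((t : ℂ) * Complex.I)

lemma norm_natCast_cpow_ofReal_mul_I {n : ℕ} (hn : 0 < n) (t : ℝ) :
    ‖(n : ℂ) ^ ((t : ℂ) * Complex.I)‖ = 1 := by
  simp [Complex.norm_natCast_cpow_of_pos hn]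

lemma norm_natCast_cpow_ofReal_mul_I_sub_le {n : ℕ} (hn : 0 < n) (t u : ℝ) :
    ‖(n : ℂ) ^ ((t : ℂ) * Complex.I) - (n : ℂ) ^ ((u : ℂ) * Complex.I)‖ ≤ |t - u| * log n := by
  have hn0 : (n : ℂ) ≠ 0 := Nat.cast_ne_zero.2 hn.ne'
  have hsplit : (n : ℂ) ^ ((t : ℂ) * Complex.I) =
      (n : ℂ) ^ ((u : ℂ) * Complex.I) * Complex.exp (Complex.I * ((t - u) * log n : ℝ)) := by
    rw [Complex.cpow_def_of_ne_zero hn0, Complex.cpow_def_of_ne_zero hn0, ← Complex.exp_add,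
      ← Complex.natCast_log]
    congr 1
    push_cast
    ring
  rw [hsplit, ← mul_sub_one, norm_mul, norm_natCast_cpow_ofReal_mul_I hn, one_mul]
  refine norm_exp_I_mul_ofReal_sub_one_le.trans_eq ?_
  rw [Real.norm_eq_abs, abs_mul, abs_of_nonneg (Real.log_natCast_nonneg n)]

lemma norm_dirichletPoly_sub_le {a : ℕ → ℂ} {N : ℕ} (ha : ∀ n ∈ Icc 1 N, ‖a n‖ ≤ 1) (t u : ℝ) :
    ‖dirichletPoly a N t - dirichletPoly a N u‖ ≤ |t - u| * N * log N := by
  rw [dirichletPoly, dirichletPoly, ← sum_sub_distrib]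
  calc ‖∑ n ∈ Icc 1 N, (a n * (n : ℂ) ^ ((t : ℂ) * Complex.I) -
          a n * (n : ℂ) ^ ((u : ℂ) * Complex.I))‖
      ≤ ∑ n ∈ Icc 1 N, |t - u| * log N := by
        refine norm_sum_le_of_le _ fun n hn ↦ ?_
        obtain ⟨hn1, hnN⟩ := mem_Icc.mp hn
        rw [← mul_sub, norm_mul]
        calc ‖a n‖ * ‖(n : ℂ) ^ ((t : ℂ) * Complex.I) - (n : ℂ) ^ ((u : ℂ) * Complex.I)‖
            ≤ 1 * (|t - u| * log n) :=
              mul_le_mul (ha n hn) (norm_natCast_cpow_ofReal_mul_I_sub_le hn1 t u)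
                (norm_nonneg _) zero_le_one
          _ ≤ |t - u| * log N := by
              rw [one_mul]; gcongr
    _ = |t - u| * N * log N := by simp; ring

lemma exists_mem_Icc_abs_sub_intCast_div_le {T t d : ℝ} (hd : 0 < d) (ht : |t| ≤ T) :
    ∃ j ∈ Icc (-⌈T * d⌉) ⌈T * d⌉, |t - j / d| ≤ d⁻¹ := by
  obtain ⟨htl, htu⟩ := abs_le.mp ht
  refine ⟨⌊t * d⌋, mem_Icc.mpr ⟨?_, ?_⟩, ?_⟩
  · rw [← Int.floor_neg, ← neg_mul]
    exact Int.floor_mono (by gcongr)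
  · exact (Int.floor_le_ceil _).trans' (Int.floor_mono (by gcongr))
  · have h1 := Int.floor_le (t * d)
    have h2 := Int.lt_floor_add_one (t * d)
    rw [show t - ⌊t * d⌋ / d = (t * d - ⌊t * d⌋) * d⁻¹ by field_simp, abs_mul,
      abs_of_pos (inv_pos.mpr hd), abs_of_nonneg (by linarith)]
    exact mul_le_of_le_one_left (inv_nonneg.mpr hd.le) (by linarith)

lemma exists_le_norm_dirichletPoly_grid {a : ℕ → ℂ} {N : ℕ} (hN : 0 < N)
    (ha : ∀ n ∈ Icc 1 N, ‖a n‖ ≤ 1) {T L : ℝ} (hT : 0 ≤ T)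
    (hL : L < ⨆ t : {t : ℝ // |t| ≤ T}, ‖dirichletPoly a N t‖) :
    ∃ j ∈ Icc (-⌈T * N ^ 2⌉) ⌈T * N ^ 2⌉, L - 1 ≤ ‖dirichletPoly a N (j / N ^ 2)‖ := by
  have : Nonempty {t : ℝ // |t| ≤ T} := ⟨⟨0, by simpa using hT⟩⟩
  obtain ⟨⟨t, ht⟩, hLt⟩ := exists_lt_of_lt_ciSup hL
  have hNpos : (0 : ℝ) < N := Nat.cast_pos.mpr hN
  obtain ⟨j, hj, hdist⟩ := exists_mem_Icc_abs_sub_intCast_div_le (pow_pos hNpos 2) ht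
  have hclose : ‖dirichletPoly a N t - dirichletPoly a N (j / N ^ 2)‖ ≤ 1 :=
    calc ‖dirichletPoly a N t - dirichletPoly a N (j / N ^ 2)‖
        ≤ |t - j / N ^ 2| * N * log N := norm_dirichletPoly_sub_le ha _ _
      _ ≤ ((N : ℝ) ^ 2)⁻¹ * N * log N := by gcongr
      _ ≤ 1 := by
          rw [show ((N : ℝ) ^ 2)⁻¹ * N * log N = log N / N by field_simp, div_le_one hNpos]
          exact (Real.log_le_sub_one_of_pos hNpos).trans (by linarith)
  have := norm_sub_norm_le (dirichletPoly a N t) (dirichletPoly a N (j / N ^ 2))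
  exact ⟨j, hj, by linarith⟩

lemma card_Icc_neg_ceil_le {x : ℝ} (hx : 0 ≤ x) : (#(Icc (-⌈x⌉) ⌈x⌉) : ℝ) ≤ 2 * x + 3 := by
  have hceil : (⌈x⌉ : ℝ) < x + 1 := Int.ceil_lt_add_one x
  have hcard : (#(Icc (-⌈x⌉) ⌈x⌉) : ℤ) = 2 * ⌈x⌉ + 1 := by
    have := Int.ceil_nonneg hx
    rw [Int.card_Icc, Int.toNat_of_nonneg (by omega)]
    ring
  have : (#(Icc (-⌈x⌉) ⌈x⌉) : ℝ) = 2 * ⌈x⌉ + 1 := by exact_mod_cast hcard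
  linarith

lemma exp_neg_sq_div_le_rpow {C : ℝ} (hC : 1 ≤ C) {N : ℕ} (hN : 0 < N) {L : ℝ}
    (hL : 6 * √(C * N * log N) ≤ L) : exp (-L ^ 2 / (8 * N)) ≤ (N : ℝ) ^ (-(C + 3)) := by
  have hNpos : (0 : ℝ) < N := Nat.cast_pos.mpr hN
  have hlog : 0 ≤ log N := Real.log_natCast_nonneg N
  have hsq : 36 * (C * N * log N) ≤ L ^ 2 := by
    have := pow_le_pow_left₀ (by positivity) hL 2
    rw [mul_pow, sq_sqrt (by positivity)] at this
    linarith
  rw [rpow_def_of_pos hNpos, exp_le_exp, neg_div, neg_le, le_div_iff₀ (by positivity)]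
  nlinarith [mul_nonneg (mul_nonneg hlog hNpos.le) (sub_nonneg.mpr hC)]

lemma one_le_sqrt_mul_mul_log {C : ℝ} (hC : 1 ≤ C) {N : ℕ} (hN : 2 ≤ N) :
    1 ≤ √(C * N * log N) := by
  have hN2 : (2 : ℝ) ≤ N := by exact_mod_cast hN
  have hlog : 1 / 2 ≤ log N := by
    have := Real.one_sub_inv_le_log_of_pos (by positivity : (0 : ℝ) < N)
    have : (N : ℝ)⁻¹ ≤ 1 / 2 := by
      rw [inv_le_comm₀ (by positivity) (by norm_num)]; linarith
    linarith
  rw [one_le_sqrt]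
  calc (1 : ℝ) = 1 * 2 * (1 / 2) := by norm_num
    _ ≤ C * N * log N := by gcongr

lemma card_Icc_neg_ceil_rpow_mul_sq_le {C : ℝ} (hC : 0 ≤ C) {N : ℕ} (hN : 0 < N) :
    (#(Icc (-⌈(N : ℝ) ^ C * N ^ 2⌉) ⌈(N : ℝ) ^ C * N ^ 2⌉) : ℝ) ≤ 5 * (N : ℝ) ^ (C + 2) := by
  have hN1 : (1 : ℝ) ≤ N := by exact_mod_cast hN
  have h1 : 1 ≤ (N : ℝ) ^ C * N ^ 2 :=
    one_le_mul_of_one_le_of_one_le (one_le_rpow hN1 hC) (one_le_pow₀ hN1)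
  rw [rpow_add (by positivity), rpow_two]
  linarith [card_Icc_neg_ceil_le (x := (N : ℝ) ^ C * N ^ 2) (by positivity)]

section Steinhaus

variable {Ω : Type*} [MeasurableSpace Ω] {μ : Measure Ω} [IsProbabilityMeasure μ]
  {r : ℕ → Ω → ℂ}

lemma measureReal_le_norm_dirichletPoly_le (hmeas : ∀ n, AEMeasurable (r n) μ)
    (hindep : iIndepFun r μ) (hnorm : ∀ n, ∀ᵐ ω ∂μ, ‖r n ω‖ ≤ 1)
    (hmean : ∀ n, ∫ ω, r n ω ∂μ = 0) (N : ℕ) (t : ℝ) {L : ℝ} (hL : 0 ≤ L) :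
    μ.real {ω | L ≤ ‖dirichletPoly (r · ω) N t‖} ≤ 4 * exp (-L ^ 2 / (8 * N)) := by
  have := measureReal_le_norm_sum_mul_le hmeas hindep hnorm hmean (Icc 1 N)
    (fun n hn ↦ (norm_natCast_cpow_ofReal_mul_I (mem_Icc.mp hn).1 t).le) hL
  rwa [Nat.card_Icc, Nat.add_sub_cancel] at this

lemma measureReal_iSup_norm_dirichletPoly_gt_le (hmeas : ∀ n, AEMeasurable (r n) μ)
    (hindep : iIndepFun r μ) (hnorm : ∀ n, ∀ᵐ ω ∂μ, ‖r n ω‖ ≤ 1)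
    (hmean : ∀ n, ∫ ω, r n ω ∂μ = 0) {C : ℝ} (hC : 1 ≤ C) {N : ℕ} (hN : 2 ≤ N) :
    μ.real {ω | (⨆ t : {t : ℝ // |t| ≤ (N : ℝ) ^ C}, ‖dirichletPoly (r · ω) N t‖) ≤
      7 * √(C * N * log N)}ᶜ ≤ 20 / N := by
  have hNpos : (0 : ℝ) < N := by positivity
  set b := √(C * N * log N)
  have hb1 : 1 ≤ b := one_le_sqrt_mul_mul_log hC hN
  set grid := Icc (-⌈(N : ℝ) ^ C * N ^ 2⌉) ⌈(N : ℝ) ^ C * N ^ 2⌉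
  have hcover : {ω | (⨆ t : {t : ℝ // |t| ≤ (N : ℝ) ^ C}, ‖dirichletPoly (r · ω) N t‖) ≤
      7 * b}ᶜ ≤ᵐ[μ] ⋃ j ∈ grid, {ω | 6 * b ≤ ‖dirichletPoly (r · ω) N (j / N ^ 2)‖} := by
    filter_upwards [ae_all_iff.mpr hnorm] with ω hω hbad
    obtain ⟨j, hj, hle⟩ := exists_le_norm_dirichletPoly_grid (by omega) (fun n _ ↦ hω n)
      (by positivity) (not_le.mp hbad)
    exact Set.mem_biUnion hj (by simp only [Set.mem_ofPred_eq]; linarith)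
  have htail : ∀ j ∈ grid, μ.real {ω | 6 * b ≤ ‖dirichletPoly (r · ω) N (j / N ^ 2)‖} ≤
      4 * (N : ℝ) ^ (-(C + 3)) := by
    intro j _
    refine (measureReal_le_norm_dirichletPoly_le hmeas hindep hnorm hmean N _
      (by positivity)).trans ?_
    gcongr
    exact exp_neg_sq_div_le_rpow hC (by omega) le_rfl
  have hcard : (#grid : ℝ) ≤ 5 * (N : ℝ) ^ (C + 2) :=
    card_Icc_neg_ceil_rpow_mul_sq_le (by linarith) (by omega)
  calc μ.real {ω | (⨆ t : {t : ℝ // |t| ≤ (N : ℝ) ^ C}, ‖dirichletPoly (r · ω) N t‖) ≤ 7 * b}ᶜ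
      ≤ μ.real (⋃ j ∈ grid, {ω | 6 * b ≤ ‖dirichletPoly (r · ω) N (j / N ^ 2)‖}) :=
        ENNReal.toReal_mono (measure_ne_top _ _) (measure_mono_ae hcover)
    _ ≤ ∑ j ∈ grid, μ.real {ω | 6 * b ≤ ‖dirichletPoly (r · ω) N (j / N ^ 2)‖} :=
        measureReal_biUnion_finset_le _ _
    _ ≤ #grid * (4 * (N : ℝ) ^ (-(C + 3))) := by
        simpa using sum_le_sum htail
    _ ≤ 5 * (N : ℝ) ^ (C + 2) * (4 * (N : ℝ) ^ (-(C + 3))) := by gcongr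
    _ = 20 / N := by
        rw [mul_mul_mul_comm, ← rpow_add hNpos, show C + 2 + -(C + 3) = -1 by ring,
          rpow_neg_one]
        ring

end Steinhaus

lemma tendsto_measure_one_of_tendsto_measureReal_compl {Ω ι : Type*} [MeasurableSpace Ω]
    {μ : Measure Ω} [IsProbabilityMeasure μ] {l : Filter ι} {s : ι → Set Ω}
    (h : Tendsto (fun i ↦ μ.real (s i)ᶜ) l (nhds 0)) : Tendsto (fun i ↦ μ (s i)) l (nhds 1) := by
  have hcompl : Tendsto (fun i ↦ μ (s i)ᶜ) l (nhds 0) := by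
    simpa [ofReal_measureReal] using ENNReal.tendsto_ofReal h
  have hlower : Tendsto (fun i ↦ 1 - μ (s i)ᶜ) l (nhds 1) := by
    simpa using ENNReal.Tendsto.sub tendsto_const_nhds hcompl (Or.inl ENNReal.one_ne_top)
  refine tendsto_of_tendsto_of_tendsto_of_le_of_le hlower tendsto_const_nhds (fun i ↦ ?_)
    (fun i ↦ prob_le_one)
  rw [tsub_le_iff_right, ← measure_univ (μ := μ)]
  exact measure_univ_le_add_compl (s i)

theorem sup_independent_dirichlet_poly
    {Ω : Type*} [MeasurableSpace Ω] (μ : MeasureTheory.Measure Ω) [IsProbabilityMeasure μ]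
    (r : ℕ → Ω → ℂ) (hmeas : ∀ n, Measurable (r n))
    (hindep : ProbabilityTheory.iIndepFun
      r μ)
    (hlaw : ∀ n : ℕ, μ.map (r n) = uniformCircle)
    (C : ℝ) (hC : 1 ≤ C) :
    ∃ K : ℝ, 0 < K ∧
      Tendsto
        (fun N : ℕ => μ {ω |
          (⨆ t : {t : ℝ // |t| ≤ (N : ℝ) ^ C},
              ‖∑ n ∈ Finset.Icc 1 N, r n ω * (n : ℂ) ^ ((t.1 : ℂ) * Complex.I)‖) ≤
            K * Real.sqrt (C * N * Real.log N)})
        atTop (nhds 1) := by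
  have hnorm (n : ℕ) : ∀ᵐ ω ∂μ, ‖r n ω‖ ≤ 1 :=
    (ae_norm_eq_one_of_map_eq_uniformCircle (hmeas n).aemeasurable (hlaw n)).mono
      fun _ h ↦ h.le
  have hmean (n : ℕ) : ∫ ω, r n ω ∂μ = 0 :=
    integral_eq_zero_of_map_eq_uniformCircle (hmeas n).aemeasurable (hlaw n)
  refine ⟨7, by norm_num, tendsto_measure_one_of_tendsto_measureReal_compl ?_⟩
  refine squeeze_zero' (Eventually.of_forall fun N ↦ measureReal_nonneg) ?_
    (tendsto_const_div_atTop_nhds_zero_nat 20)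
  filter_upwards [eventually_ge_atTop 2] with N hN
  exact measureReal_iSup_norm_dirichletPoly_gt_le (fun n ↦ (hmeas n).aemeasurable) hindep hnorm
    hmean hC hN
end
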